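/- Let G be a graph, v ∈ V(G), and let W(K_n) be the whiskered complete graph on vertices x_1,...,x_n, y_1,...,y_n (n ≥ 1), with edges all pairs {x_i,x_j} for i ≠ j and the whiskers {x_i,y_i}. Let Γ be the graph obtained from the disjoint union of G and W(K_n) by adding all edges {v, x_i} for i ∈ [n]. Then β(Γ) = β(G) + n. -/

import Mathlib

/-- `C` is a vertex cover of the simple graph `G`. -/
def IsVertexCover {α : Type*} (G : SimpleGraph α) (C : Finset α) : Prop :=
  ∀ ⦃u v : α⦄, G.Adj u v → u ∈ C ∨ v ∈ C

/-- The minimum vertex cover number `β(G)`. -/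
noncomputable def vcNum {α : Type*} (G : SimpleGraph α) : ℕ :=
  sInf {m : ℕ | ∃ C : Finset α, IsVertexCover G C ∧ C.card = m}

/-- The graph `Γ` obtained from the disjoint union of `G` and the whiskered complete graph
`W(K_n)` (with clique vertices `Sum.inr (Sum.inl i)` playing the role of `x_i` and whisker
vertices `Sum.inr (Sum.inr i)` playing the role of `y_i`) by joining the fixed vertex `v` of
`G` to every clique vertex `x_i`. -/
def attachWhiskeredComplete {α : Type*} (G : SimpleGraph α) (v : α) (n : ℕ) :
    SimpleGraph (α ⊕ (Fin n ⊕ Fin n)) where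
  Adj a b :=
    match a, b with
    | Sum.inl u, Sum.inl w => G.Adj u w
    | Sum.inr (Sum.inl i), Sum.inr (Sum.inl j) => i ≠ j
    | Sum.inr (Sum.inl i), Sum.inr (Sum.inr j) => i = j
    | Sum.inr (Sum.inr i), Sum.inr (Sum.inl j) => i = j
    | Sum.inr (Sum.inr _), Sum.inr (Sum.inr _) => False
    | Sum.inl u, Sum.inr (Sum.inl _) => u = v
    | Sum.inr (Sum.inl _), Sum.inl u => u = v
    | Sum.inl _, Sum.inr (Sum.inr _) => False
    | Sum.inr (Sum.inr _), Sum.inl _ => False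
  symm := by
    constructor
    rintro (u | (i | i)) (w | (j | j)) h
    · exact h.symm
    · exact h
    · exact h
    · exact h
    · exact h.symm
    · exact h.symm
    · exact h
    · exact h.symm
    · exact h
  loopless := by
    constructor
    rintro (u | (i | i)) h
    · exact (G.ne_of_adj h) rfl
    · exact h rfl
    · exact h

/-
Proof idea: a cover of `G` together with all clique vertices `x_i` covers `Γ`. Conversely, a
cover of `Γ` splits into its part in `G`, which covers `G`, and its part in `W(K_n)`, which
meets each of the `n` pairwise disjoint whiskers `{x_i, y_i}`.
-/

open Finset

theorem isVertexCover_univ {α : Type*} [Fintype α] (G : SimpleGraph α) :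
    IsVertexCover G univ :=
  fun u _ _ => Or.inl (mem_univ u)

namespace IsVertexCover

variable {α : Type*} {G : SimpleGraph α} {C : Finset α}

theorem card_le_card_of_pairwise_disjoint_edges {ι : Type*} [Fintype ι]
    (hC : IsVertexCover G C) {a b : ι → α}
    (hadj : ∀ i, G.Adj (a i) (b i))
    (hdisj : Pairwise fun i j => Disjoint ({a i, b i} : Set α) {a j, b j}) :
    Fintype.card ι ≤ #C := by
  have hmeet : ∀ i, ∃ c ∈ C, c ∈ ({a i, b i} : Set α) := fun i => (hC (hadj i)).elim
    (fun h => ⟨a i, h, Or.inl rfl⟩) (fun h => ⟨b i, h, Or.inr rfl⟩)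
  choose c hcC hcab using hmeet
  have hc_inj : Function.Injective c := fun i j hij => by
    by_contra hne
    exact Set.disjoint_left.1 (hdisj hne) (hcab i) (hij ▸ hcab j)
  simpa using card_le_card_of_injOn (s := univ) c (fun i _ => hcC i) hc_inj.injOn

variable {β : Type*} {H : SimpleGraph (α ⊕ β)} {u : Finset (α ⊕ β)}

theorem toLeft (hu : IsVertexCover H u) : IsVertexCover (H.comap Sum.inl) u.toLeft :=
  fun a b hab => by simpa using hu hab

theorem toRight (hu : IsVertexCover H u) : IsVertexCover (H.comap Sum.inr) u.toRight :=
  fun a b hab => by simpa using hu hab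

end IsVertexCover

section vcNum

variable {α : Type*} {G : SimpleGraph α}

theorem vcNum_le_card {C : Finset α} (hC : IsVertexCover G C) : vcNum G ≤ #C :=
  Nat.sInf_le ⟨C, hC, rfl⟩

variable [Fintype α]

theorem exists_isVertexCover_card_eq_vcNum : ∃ C, IsVertexCover G C ∧ #C = vcNum G :=
  Nat.sInf_mem (s := {m | ∃ C, IsVertexCover G C ∧ #C = m})
    ⟨_, univ, isVertexCover_univ G, rfl⟩

theorem le_vcNum {m : ℕ} (h : ∀ C, IsVertexCover G C → m ≤ #C) : m ≤ vcNum G := by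
  obtain ⟨C, hC, hcard⟩ := exists_isVertexCover_card_eq_vcNum (G := G)
  exact hcard ▸ h C hC

end vcNum

section attachWhiskeredComplete

variable {α : Type*} {G : SimpleGraph α}

theorem isVertexCover_attachWhiskeredComplete (v : α) (n : ℕ) {C : Finset α}
    (hC : IsVertexCover G C) :
    IsVertexCover (attachWhiskeredComplete G v n) (C.disjSum (univ.disjSum ∅)) := by
  rintro (u | i | i) (w | j | j) h
  · simpa using hC h
  all_goals simp_all [attachWhiskeredComplete]

variable {v : α} {n : ℕ}

theorem comap_inl_attachWhiskeredComplete :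
    (attachWhiskeredComplete G v n).comap Sum.inl = G :=
  rfl

theorem vcNum_attachWhiskeredComplete_le [Fintype α] :
    vcNum (attachWhiskeredComplete G v n) ≤ vcNum G + n := by
  obtain ⟨C, hC, hcard⟩ := exists_isVertexCover_card_eq_vcNum (G := G)
  simpa [card_disjSum, hcard] using
    vcNum_le_card (isVertexCover_attachWhiskeredComplete v n hC)

theorem IsVertexCover.le_card_toRight {u : Finset (α ⊕ (Fin n ⊕ Fin n))}
    (hu : IsVertexCover (attachWhiskeredComplete G v n) u) : n ≤ #u.toRight := by
  simpa using hu.toRight.card_le_card_of_pairwise_disjoint_edges (a := Sum.inl) (b := Sum.inr)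
    (fun i => rfl) fun i j hij => by simp [Set.disjoint_left, hij]

end attachWhiskeredComplete

theorem stmt1_general {α : Type*} [Fintype α] (G : SimpleGraph α) (v : α) (n : ℕ) :
    vcNum (attachWhiskeredComplete G v n) = vcNum G + n := by
  refine le_antisymm vcNum_attachWhiskeredComplete_le (le_vcNum fun u hu => ?_)
  have hG : vcNum G ≤ #u.toLeft := by
    simpa only [comap_inl_attachWhiskeredComplete] using vcNum_le_card hu.toLeft
  have hW : n ≤ #u.toRight := hu.le_card_toRight
  rw [← card_toLeft_add_card_toRight]
  omega

theorem stmt1 {α : Type*} [Fintype α] (G : SimpleGraph α) (v : α) (n : ℕ)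
    (hn : 1 ≤ n) :
    vcNum (attachWhiskeredComplete G v n) = vcNum G + n :=
  stmt1_general G v n
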